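/- Let ψ₁, ψ₂, ψ₃ be density matrices on A ⊗ C₁, C₂ ⊗ D₁ and D₂ ⊗ B respectively, and set ψ = ψ₁ ⊗ ψ₂ ⊗ ψ₃, regarded as a state shared by Alice (A), Bob (B) and two helpers C = C₁ ⊗ C₂ and D = D₁ ⊗ D₂. Then: (i) I(AC⟩BD)_ψ = I(C₂⟩D₁)_{ψ₂} − S(AC₁)_{ψ₁}; (ii) I(ACD⟩B)_ψ = I(D₂⟩B)_{ψ₃} − S(AC₁)_{ψ₁} − S(C₂D₁)_{ψ₂}; (iii) I(A⟩BCD)_ψ = I(A⟩C₁)_{ψ₁}. Consequently the minimum cut coherent information satisfies I^c_min(ψ, A:B) ≤ min{ I(A⟩C₁)_{ψ₁} , I(C₂⟩D₁)_{ψ₂} , I(D₂⟩B)_{ψ₃} }. -/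

import Mathlib

/-!
Up to a permutation of tensor factors, `ψ` is the Kronecker product `ψ₁ ⊗ ψ₂ ⊗ ψ₃`, and each
reduced state entering a cut is again such a product: a factor `ψᵢ` traced out completely
contributes only its trace `1`, one traced out on a single side becomes a partial trace. Since
the eigenvalues of `ρ ⊗ σ` are the products `λᵢ μⱼ`, the entropy is additive on Kronecker products
of unit-trace Hermitian matrices, and it is invariant under permuting factors; this gives the three
identities. The bound follows from them and `S ≥ 0`.
-/

open Matrix
open scoped ComplexOrder

/-- von Neumann entropy `S(ρ) = -Tr(ρ log₂ ρ)` of a (Hermitian) matrix, computed from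
its eigenvalues. -/
noncomputable def vNEntropy {n : Type*} [Fintype n] [DecidableEq n] (ρ : Matrix n n ℂ) : ℝ :=
  if h : ρ.IsHermitian then -∑ i, (h.eigenvalues i) * Real.logb 2 (h.eigenvalues i) else 0

section
variable {α β : Type*} [Fintype α] [Fintype β] [DecidableEq α] [DecidableEq β]

/-- Partial trace over the left factor of a bipartite state on `α ⊗ β`. -/
noncomputable def trLeft (ρ : Matrix (α × β) (α × β) ℂ) : Matrix β β ℂ :=
  fun b b' => ∑ a, ρ (a, b) (a, b')

end

theorem Matrix.trace_eq_sum_sum {α β R : Type*} [Fintype α] [Fintype β] [AddCommMonoid R]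
    (ρ : Matrix (α × β) (α × β) R) : ρ.trace = ∑ a, ∑ b, ρ (a, b) (a, b) :=
  Fintype.sum_prod_type _

theorem Matrix.IsHermitian.trLeft {α β : Type*} [Fintype α] {ρ : Matrix (α × β) (α × β) ℂ}
    (hρ : ρ.IsHermitian) : (trLeft ρ).IsHermitian := by
  ext b b'
  simp only [conjTranspose_apply, _root_.trLeft, star_sum]
  exact Finset.sum_congr rfl fun a _ => by rw [← conjTranspose_apply, hρ.eq]

theorem trace_trLeft {α β : Type*} [Fintype α] [Fintype β] (ρ : Matrix (α × β) (α × β) ℂ) :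
    (trLeft ρ).trace = ρ.trace := by
  rw [trace_eq_sum_sum, Finset.sum_comm]
  rfl

open scoped Kronecker in
theorem Matrix.IsHermitian.kronecker {n m R : Type*} [CommMagma R] [StarMul R]
    {ρ : Matrix n n R} {σ : Matrix m m R} (hρ : ρ.IsHermitian) (hσ : σ.IsHermitian) :
    (ρ ⊗ₖ σ).IsHermitian := by
  rw [IsHermitian, conjTranspose_kronecker, hρ.eq, hσ.eq]

section Spectrum
open Polynomial
open scoped Kronecker
variable {𝕜 n m ι : Type*} [RCLike 𝕜] [Fintype n] [DecidableEq n] [Fintype m] [DecidableEq m]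
  [Fintype ι]

theorem Matrix.IsHermitian.sum_comp_eigenvalues_eq_of_charpoly {M : Matrix n n 𝕜}
    (hM : M.IsHermitian) {v : ι → ℝ} (hv : M.charpoly = ∏ i, (X - C (v i : 𝕜))) (f : ℝ → ℝ) :
    ∑ i, f (hM.eigenvalues i) = ∑ i, f (v i) := by
  have hroots : M.charpoly.roots = Finset.univ.val.map (fun i => (v i : 𝕜)) := by
    rw [hv, roots_prod _ _ (by simp [Finset.prod_ne_zero_iff, X_sub_C_ne_zero])]
    simp
  rw [hM.roots_charpoly_eq_eigenvalues] at hroots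
  have h := congrArg (fun s : Multiset 𝕜 => (s.map fun z => f (RCLike.re z)).sum) hroots
  simp only [Multiset.map_map, Function.comp_def, RCLike.ofReal_re] at h
  exact h

theorem Matrix.IsHermitian.charpoly_kronecker {ρ : Matrix n n 𝕜} {σ : Matrix m m 𝕜}
    (hρ : ρ.IsHermitian) (hσ : σ.IsHermitian) :
    (ρ ⊗ₖ σ).charpoly
      = ∏ p : n × m, (X - C ((hρ.eigenvalues p.1 * hσ.eigenvalues p.2 : ℝ) : 𝕜)) := by
  conv_lhs => rw [hρ.spectral_theorem, hσ.spectral_theorem]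
  simp only [Unitary.conjStarAlgAut_apply]
  rw [mul_kronecker_mul, mul_kronecker_mul, charpoly_mul_comm, ← mul_assoc, ← mul_kronecker_mul,
    Unitary.coe_star_mul_self, Unitary.coe_star_mul_self, one_kronecker_one, one_mul,
    diagonal_kronecker_diagonal, charpoly_diagonal]
  simp

theorem Matrix.IsHermitian.sum_eigenvalues_eq_one {M : Matrix n n 𝕜} (hM : M.IsHermitian)
    (htr : M.trace = 1) : ∑ i, hM.eigenvalues i = 1 := by
  have h := hM.trace_eq_sum_eigenvalues
  rw [htr] at h
  simpa using (congrArg RCLike.re h).symm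

end Spectrum

theorem Real.mul_mul_logb_mul (b x y : ℝ) :
    x * y * Real.logb b (x * y) = y * (x * Real.logb b x) + x * (y * Real.logb b y) := by
  have h := Real.negMulLog_mul x y
  simp only [Real.negMulLog, Real.logb] at h ⊢
  linear_combination (-1 / Real.log b) * h

section Entropy
open Polynomial
open scoped Kronecker
variable {n m ι : Type*} [Fintype n] [DecidableEq n] [Fintype m] [DecidableEq m] [Fintype ι]

theorem vNEntropy_eq_of_charpoly {M : Matrix n n ℂ} (hM : M.IsHermitian) {v : ι → ℝ}
    (hv : M.charpoly = ∏ i, (X - C (RCLike.ofReal (v i) : ℂ))) :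
    vNEntropy M = -∑ i, v i * Real.logb 2 (v i) := by
  rw [vNEntropy, dif_pos hM, hM.sum_comp_eigenvalues_eq_of_charpoly hv (fun x => x * Real.logb 2 x)]

theorem vNEntropy_submatrix_equiv (e : m ≃ n) {M : Matrix n n ℂ} (hM : M.IsHermitian) :
    vNEntropy (M.submatrix e e) = vNEntropy M := by
  have hv : (M.submatrix e e).charpoly = ∏ i, (X - C (RCLike.ofReal (hM.eigenvalues i) : ℂ)) := by
    rw [show M.submatrix e e = reindex e.symm e.symm M from rfl, charpoly_reindex,
      hM.charpoly_eq]
  rw [vNEntropy_eq_of_charpoly (hM.submatrix e) hv, vNEntropy, dif_pos hM]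

theorem vNEntropy_kronecker {ρ : Matrix n n ℂ} {σ : Matrix m m ℂ}
    (hρ : ρ.IsHermitian) (hσ : σ.IsHermitian) (hρtr : ρ.trace = 1) (hσtr : σ.trace = 1) :
    vNEntropy (ρ ⊗ₖ σ) = vNEntropy ρ + vNEntropy σ := by
  rw [vNEntropy_eq_of_charpoly (hρ.kronecker hσ) (hρ.charpoly_kronecker hσ),
    vNEntropy, dif_pos hρ, vNEntropy, dif_pos hσ, Fintype.sum_prod_type]
  simp only [Real.mul_mul_logb_mul, Finset.sum_add_distrib, ← Finset.mul_sum, ← Finset.sum_mul,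
    hρ.sum_eigenvalues_eq_one hρtr, hσ.sum_eigenvalues_eq_one hσtr]
  ring

theorem vNEntropy_nonneg {M : Matrix n n ℂ} (hM : M.PosSemidef) (hMtr : M.trace = 1) :
    0 ≤ vNEntropy M := by
  rw [vNEntropy, dif_pos hM.1, neg_nonneg]
  refine Finset.sum_nonpos fun i _ => ?_
  have h₀ := hM.eigenvalues_nonneg i
  have h₁ : hM.1.eigenvalues i ≤ 1 := by
    rw [← hM.1.sum_eigenvalues_eq_one hMtr]
    exact Finset.single_le_sum (fun j _ => hM.eigenvalues_nonneg j) (Finset.mem_univ i)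
  exact mul_nonpos_of_nonneg_of_nonpos h₀ (Real.logb_nonpos one_lt_two h₀ h₁)

end Entropy

open scoped Kronecker in
theorem vNEntropy_submatrix_kronecker_kronecker {κ n m l : Type*} [Fintype κ] [DecidableEq κ]
    [Fintype n] [DecidableEq n] [Fintype m] [DecidableEq m] [Fintype l] [DecidableEq l]
    (e : κ ≃ (n × m) × l) {X : Matrix n n ℂ} {Y : Matrix m m ℂ} {Z : Matrix l l ℂ}
    (hX : X.IsHermitian) (hY : Y.IsHermitian) (hZ : Z.IsHermitian)
    (hXtr : X.trace = 1) (hYtr : Y.trace = 1) (hZtr : Z.trace = 1) :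
    vNEntropy (((X ⊗ₖ Y) ⊗ₖ Z).submatrix e e) = vNEntropy X + vNEntropy Y + vNEntropy Z := by
  have hXYtr : (X ⊗ₖ Y).trace = 1 := by rw [trace_kronecker, hXtr, hYtr, one_mul]
  rw [vNEntropy_submatrix_equiv e ((hX.kronecker hY).kronecker hZ),
    vNEntropy_kronecker (hX.kronecker hY) hZ hXYtr hZtr, vNEntropy_kronecker hX hY hXtr hYtr]

section
variable {A B C₁ C₂ D₁ D₂ : Type*}

def chainEquiv : (A × B × C₁ × C₂ × D₁ × D₂) ≃ ((A × C₁) × (C₂ × D₁)) × (D₂ × B) where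
  toFun p := (((p.1, p.2.2.1), (p.2.2.2.1, p.2.2.2.2.1)), (p.2.2.2.2.2, p.2.1))
  invFun q := (q.1.1.1, q.2.2, q.1.1.2, q.1.2.1, q.1.2.2, q.2.1)
  left_inv _ := rfl
  right_inv _ := rfl

def chainEquivBCD : (B × C₁ × C₂ × D₁ × D₂) ≃ (C₁ × (C₂ × D₁)) × (D₂ × B) where
  toFun p := ((p.2.1, (p.2.2.1, p.2.2.2.1)), (p.2.2.2.2, p.1))
  invFun q := (q.2.2, q.1.1, q.1.2.1, q.1.2.2, q.2.1)
  left_inv _ := rfl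
  right_inv _ := rfl

def chainEquivBD : (B × D₁ × D₂) ≃ D₁ × (D₂ × B) where
  toFun p := (p.2.1, (p.2.2, p.1))
  invFun q := (q.2.2, q.1, q.2.1)
  left_inv _ := rfl
  right_inv _ := rfl

end

section
variable {A B C₁ C₂ D₁ D₂ : Type*}
  [Fintype A] [Fintype B] [Fintype C₁] [Fintype C₂] [Fintype D₁] [Fintype D₂]
  [DecidableEq A] [DecidableEq B] [DecidableEq C₁] [DecidableEq C₂]
  [DecidableEq D₁] [DecidableEq D₂]

/-- The state `ψ = ψ₁ ⊗ ψ₂ ⊗ ψ₃` on `A ⊗ B ⊗ C₁ ⊗ C₂ ⊗ D₁ ⊗ D₂`, where `ψ₁` lives on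
`A ⊗ C₁`, `ψ₂` on `C₂ ⊗ D₁` and `ψ₃` on `D₂ ⊗ B`; the helpers are `C = C₁ ⊗ C₂` and
`D = D₁ ⊗ D₂`. -/
noncomputable def chainState (ψ₁ : Matrix (A × C₁) (A × C₁) ℂ)
    (ψ₂ : Matrix (C₂ × D₁) (C₂ × D₁) ℂ) (ψ₃ : Matrix (D₂ × B) (D₂ × B) ℂ) :
    Matrix (A × B × C₁ × C₂ × D₁ × D₂) (A × B × C₁ × C₂ × D₁ × D₂) ℂ :=
  fun p q =>
    ψ₁ (p.1, p.2.2.1) (q.1, q.2.2.1) * ψ₂ (p.2.2.2.1, p.2.2.2.2.1) (q.2.2.2.1, q.2.2.2.2.1) *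
      ψ₃ (p.2.2.2.2.2, p.2.1) (q.2.2.2.2.2, q.2.1)

variable (ψ : Matrix (A × B × C₁ × C₂ × D₁ × D₂) (A × B × C₁ × C₂ × D₁ × D₂) ℂ)

/-- Reduced state on `B ⊗ D₁ ⊗ D₂`. -/
noncomputable def redBD (ψ : Matrix (A × B × C₁ × C₂ × D₁ × D₂) (A × B × C₁ × C₂ × D₁ × D₂) ℂ) :
    Matrix (B × D₁ × D₂) (B × D₁ × D₂) ℂ :=
  fun p q => ∑ a, ∑ c₁, ∑ c₂,
    ψ (a, p.1, c₁, c₂, p.2.1, p.2.2) (a, q.1, c₁, c₂, q.2.1, q.2.2)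

/-- Reduced state on `B`. -/
noncomputable def redB6 (ψ : Matrix (A × B × C₁ × C₂ × D₁ × D₂) (A × B × C₁ × C₂ × D₁ × D₂) ℂ) :
    Matrix B B ℂ :=
  fun b b' => ∑ a, ∑ c₁, ∑ c₂, ∑ d₁, ∑ d₂,
    ψ (a, b, c₁, c₂, d₁, d₂) (a, b', c₁, c₂, d₁, d₂)

/-- Reduced state on `B ⊗ C₁ ⊗ C₂ ⊗ D₁ ⊗ D₂` (trace out `A`). -/
noncomputable def redBCD (ψ : Matrix (A × B × C₁ × C₂ × D₁ × D₂) (A × B × C₁ × C₂ × D₁ × D₂) ℂ) :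
    Matrix (B × C₁ × C₂ × D₁ × D₂) (B × C₁ × C₂ × D₁ × D₂) ℂ :=
  fun p q => ∑ a, ψ (a, p.1, p.2.1, p.2.2.1, p.2.2.2.1, p.2.2.2.2)
    (a, q.1, q.2.1, q.2.2.1, q.2.2.2.1, q.2.2.2.2)

/-- Reduced state on `B ⊗ C₁ ⊗ C₂` (trace out `A` and `D`). -/
noncomputable def redBC6 (ψ : Matrix (A × B × C₁ × C₂ × D₁ × D₂) (A × B × C₁ × C₂ × D₁ × D₂) ℂ) :
    Matrix (B × C₁ × C₂) (B × C₁ × C₂) ℂ :=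
  fun p q => ∑ a, ∑ d₁, ∑ d₂,
    ψ (a, p.1, p.2.1, p.2.2, d₁, d₂) (a, q.1, q.2.1, q.2.2, d₁, d₂)

/-- `I(A⟩BCD)_ψ` (cut `T = ∅`). -/
noncomputable def cutEmpty : ℝ := vNEntropy (redBCD ψ) - vNEntropy ψ

/-- `I(AC⟩BD)_ψ` (cut `T = {C}`). -/
noncomputable def cutC : ℝ := vNEntropy (redBD ψ) - vNEntropy ψ

/-- `I(AD⟩BC)_ψ` (cut `T = {D}`). -/
noncomputable def cutD : ℝ := vNEntropy (redBC6 ψ) - vNEntropy ψ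

/-- `I(ACD⟩B)_ψ` (cut `T = {C, D}`). -/
noncomputable def cutCD : ℝ := vNEntropy (redB6 ψ) - vNEntropy ψ

/-- Minimum cut coherent information `I^c_min(ψ, A:B)` for two helpers `C` and `D`: the
minimum of `I(A T⟩B T̄)_ψ` over all four subsets `T ⊆ {C, D}`. -/
noncomputable def IcminCD : ℝ :=
  min (min (cutEmpty ψ) (cutC ψ)) (min (cutD ψ) (cutCD ψ))

section
open scoped Kronecker
variable {ψ₁ : Matrix (A × C₁) (A × C₁) ℂ} {ψ₂ : Matrix (C₂ × D₁) (C₂ × D₁) ℂ}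
  {ψ₃ : Matrix (D₂ × B) (D₂ × B) ℂ}

theorem vNEntropy_chainState (hψ₁ : ψ₁.IsHermitian) (hψ₂ : ψ₂.IsHermitian)
    (hψ₃ : ψ₃.IsHermitian) (hψ₁tr : ψ₁.trace = 1) (hψ₂tr : ψ₂.trace = 1) (hψ₃tr : ψ₃.trace = 1) :
    vNEntropy (chainState ψ₁ ψ₂ ψ₃) = vNEntropy ψ₁ + vNEntropy ψ₂ + vNEntropy ψ₃ := by
  rw [show chainState ψ₁ ψ₂ ψ₃ = ((ψ₁ ⊗ₖ ψ₂) ⊗ₖ ψ₃).submatrix chainEquiv chainEquiv from rfl]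
  exact vNEntropy_submatrix_kronecker_kronecker _ hψ₁ hψ₂ hψ₃ hψ₁tr hψ₂tr hψ₃tr

theorem cutEmpty_chainState (hψ₁ : ψ₁.IsHermitian) (hψ₂ : ψ₂.IsHermitian)
    (hψ₃ : ψ₃.IsHermitian) (hψ₁tr : ψ₁.trace = 1) (hψ₂tr : ψ₂.trace = 1) (hψ₃tr : ψ₃.trace = 1) :
    cutEmpty (chainState ψ₁ ψ₂ ψ₃) = vNEntropy (trLeft ψ₁) - vNEntropy ψ₁ := by
  have hred : redBCD (chainState ψ₁ ψ₂ ψ₃)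
      = ((trLeft ψ₁ ⊗ₖ ψ₂) ⊗ₖ ψ₃).submatrix chainEquivBCD chainEquivBCD := by
    ext p q
    simp only [redBCD, chainState, trLeft, submatrix_apply, kroneckerMap_apply, Finset.sum_mul]
    rfl
  rw [cutEmpty, hred, vNEntropy_submatrix_kronecker_kronecker _ hψ₁.trLeft hψ₂ hψ₃
    ((trace_trLeft ψ₁).trans hψ₁tr) hψ₂tr hψ₃tr, vNEntropy_chainState hψ₁ hψ₂ hψ₃ hψ₁tr hψ₂tr hψ₃tr]
  ring

theorem cutC_chainState (hψ₁ : ψ₁.IsHermitian) (hψ₂ : ψ₂.IsHermitian)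
    (hψ₃ : ψ₃.IsHermitian) (hψ₁tr : ψ₁.trace = 1) (hψ₂tr : ψ₂.trace = 1) (hψ₃tr : ψ₃.trace = 1) :
    cutC (chainState ψ₁ ψ₂ ψ₃) = (vNEntropy (trLeft ψ₂) - vNEntropy ψ₂) - vNEntropy ψ₁ := by
  have hred : redBD (chainState ψ₁ ψ₂ ψ₃)
      = (trLeft ψ₂ ⊗ₖ ψ₃).submatrix chainEquivBD chainEquivBD := by
    ext p q
    simp only [redBD, chainState, trLeft, submatrix_apply, kroneckerMap_apply, mul_assoc,
      ← Finset.mul_sum, ← Finset.sum_mul]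
    rw [← trace_eq_sum_sum, hψ₁tr, one_mul]
    rfl
  rw [cutC, hred, vNEntropy_submatrix_equiv _ (hψ₂.trLeft.kronecker hψ₃),
    vNEntropy_kronecker hψ₂.trLeft hψ₃ ((trace_trLeft ψ₂).trans hψ₂tr) hψ₃tr,
    vNEntropy_chainState hψ₁ hψ₂ hψ₃ hψ₁tr hψ₂tr hψ₃tr]
  ring

theorem cutCD_chainState (hψ₁ : ψ₁.IsHermitian) (hψ₂ : ψ₂.IsHermitian)
    (hψ₃ : ψ₃.IsHermitian) (hψ₁tr : ψ₁.trace = 1) (hψ₂tr : ψ₂.trace = 1) (hψ₃tr : ψ₃.trace = 1) :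
    cutCD (chainState ψ₁ ψ₂ ψ₃)
      = (vNEntropy (trLeft ψ₃) - vNEntropy ψ₃) - vNEntropy ψ₁ - vNEntropy ψ₂ := by
  have hred : redB6 (chainState ψ₁ ψ₂ ψ₃) = trLeft ψ₃ := by
    ext b b'
    simp only [redB6, chainState, trLeft, mul_assoc, ← Finset.mul_sum, ← Finset.sum_mul]
    rw [← trace_eq_sum_sum, ← trace_eq_sum_sum, hψ₁tr, hψ₂tr, one_mul, one_mul]
  rw [cutCD, hred, vNEntropy_chainState hψ₁ hψ₂ hψ₃ hψ₁tr hψ₂tr hψ₃tr]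
  ring

end

/-- For a one-dimensional chain `ψ = ψ₁ ⊗ ψ₂ ⊗ ψ₃` with `ψ₁` on `A ⊗ C₁`, `ψ₂` on `C₂ ⊗ D₁`
and `ψ₃` on `D₂ ⊗ B`:
(i) `I(AC⟩BD)_ψ = I(C₂⟩D₁)_{ψ₂} - S(AC₁)_{ψ₁}`;
(ii) `I(ACD⟩B)_ψ = I(D₂⟩B)_{ψ₃} - S(AC₁)_{ψ₁} - S(C₂D₁)_{ψ₂}`;
(iii) `I(A⟩BCD)_ψ = I(A⟩C₁)_{ψ₁}`.
Consequently `I^c_min(ψ, A:B) ≤ min { I(A⟩C₁)_{ψ₁}, I(C₂⟩D₁)_{ψ₂}, I(D₂⟩B)_{ψ₃} }`. -/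
theorem chain_cut_bounds (ψ₁ : Matrix (A × C₁) (A × C₁) ℂ)
    (ψ₂ : Matrix (C₂ × D₁) (C₂ × D₁) ℂ) (ψ₃ : Matrix (D₂ × B) (D₂ × B) ℂ)
    (h₁ : ψ₁.PosSemidef) (h₁tr : ψ₁.trace = 1)
    (h₂ : ψ₂.PosSemidef) (h₂tr : ψ₂.trace = 1)
    (h₃ : ψ₃.PosSemidef) (h₃tr : ψ₃.trace = 1) :
    cutC (chainState ψ₁ ψ₂ ψ₃)
        = (vNEntropy (trLeft ψ₂) - vNEntropy ψ₂) - vNEntropy ψ₁ ∧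
    cutCD (chainState ψ₁ ψ₂ ψ₃)
        = (vNEntropy (trLeft ψ₃) - vNEntropy ψ₃) - vNEntropy ψ₁ - vNEntropy ψ₂ ∧
    cutEmpty (chainState ψ₁ ψ₂ ψ₃)
        = vNEntropy (trLeft ψ₁) - vNEntropy ψ₁ ∧
    IcminCD (chainState ψ₁ ψ₂ ψ₃)
        ≤ min (vNEntropy (trLeft ψ₁) - vNEntropy ψ₁)
            (min (vNEntropy (trLeft ψ₂) - vNEntropy ψ₂)
              (vNEntropy (trLeft ψ₃) - vNEntropy ψ₃)) := by
  have hC := cutC_chainState h₁.1 h₂.1 h₃.1 h₁tr h₂tr h₃tr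
  have hCD := cutCD_chainState h₁.1 h₂.1 h₃.1 h₁tr h₂tr h₃tr
  have hE := cutEmpty_chainState h₁.1 h₂.1 h₃.1 h₁tr h₂tr h₃tr
  refine ⟨hC, hCD, hE, ?_⟩
  have hS₁ := vNEntropy_nonneg h₁ h₁tr
  have hS₂ := vNEntropy_nonneg h₂ h₂tr
  rw [IcminCD, ← hE]
  refine le_min ((min_le_left _ _).trans (min_le_left _ _)) (le_min ?_ ?_)
  · exact ((min_le_left _ _).trans (min_le_right _ _)).trans (by linarith)
  · exact ((min_le_right _ _).trans (min_le_right _ _)).trans (by linarith)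

end
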